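/- arXiv:1304.7301 — 2 statements merged into one kernel-verified Lean document; each statement's English description precedes it below -/
import Mathlib

section
/- Randomness via dual assignment: let the initial configuration λ_0 of the '1 Or 3' cellular automaton be uniformly random (i.i.d. fair bits) on a fixed set K ⊆ ℤ and deterministic on the complement of K. Let S = {(x_1,t_1), …, (x_n,t_n)} be a fixed ordered set of space-time points admitting a function F: S → K such that λ•_{t_j}(x_j − F(x_i,t_i)) equals 1 when j = i and 0 when j < i (where λ• is the evolution from a single 1 at the origin). Then the random variables λ(x_1,t_1), …, λ(x_n,t_n) are independent fair bits. -/
open MeasureTheory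

/-- Configurations of the one-dimensional CA: states in `ZMod 2` indexed by `ℤ`. -/
abbrev Config := ℤ → ZMod 2

/-- One step of the `1 Or 3` rule. -/
def step (f : Config) : Config := fun x => f (x - 1) + f x + f (x + 1)

/-- Evolution of the `1 Or 3` rule. -/
def evol (f : Config) (t : ℕ) : Config := step^[t] f

/-- Single `1` at the origin. -/
def single : Config := fun x => if x = 0 then 1 else 0

/-- The random variables `X x`, `x ∈ K`, are i.i.d. fair bits under `μ`:
every finite cylinder event indexed inside `K` has the product probability. -/
def IIDFairOn {Ω : Type*} [MeasurableSpace Ω] (μ : Measure Ω)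
    (X : Ω → Config) (K : Set ℤ) : Prop :=
  ∀ S : Finset ℤ, ↑S ⊆ K → ∀ v : ℤ → ZMod 2,
    μ {ω | ∀ x ∈ S, X ω x = v x} = (2 : ENNReal)⁻¹ ^ S.card

lemma evol_succ (f : Config) (t : ℕ) (x : ℤ) :
    evol f (t + 1) x = evol f t (x - 1) + evol f t x + evol f t (x + 1) := by
  show step^[t+1] f x = _
  rw [Function.iterate_succ_apply']
  rfl

lemma evol_zero_t (f : Config) (x : ℤ) : evol f 0 x = f x := rfl

lemma evol_add (f g : Config) (t : ℕ) (x : ℤ) :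
    evol (fun z => f z + g z) t x = evol f t x + evol g t x := by
  induction t generalizing x with
  | zero => rfl
  | succ t ih => simp only [evol_succ, ih]; ring

lemma evol_zero (t : ℕ) (x : ℤ) : evol (fun _ => (0 : ZMod 2)) t x = 0 := by
  induction t generalizing x with
  | zero => rfl
  | succ t ih => simp [evol_succ, ih]

lemma evol_congr {f g : Config} (t : ℕ) (x : ℤ)
    (h : ∀ y, x - t ≤ y → y ≤ x + t → f y = g y) : evol f t x = evol g t x := by
  induction t generalizing x with
  | zero => exact h x (by omega) (by omega)
  | succ t ih =>
      rw [evol_succ, evol_succ, ih (x-1) (fun y h1 h2 => h y (by omega) (by omega)),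
        ih x (fun y h1 h2 => h y (by omega) (by omega)),
        ih (x+1) (fun y h1 h2 => h y (by omega) (by omega))]

lemma evol_shift (f : Config) (a : ℤ) (t : ℕ) (x : ℤ) :
    evol (fun z => f (z - a)) t x = evol f t (x - a) := by
  induction t generalizing x with
  | zero => rfl
  | succ t ih => simp only [evol_succ, ih]; ring_nf

lemma evol_smul (c : ZMod 2) (f : Config) (t : ℕ) (x : ℤ) :
    evol (fun z => c * f z) t x = c * evol f t x := by
  induction t generalizing x with
  | zero => rfl
  | succ t ih => simp only [evol_succ, ih]; ring

lemma evol_point (a : ℤ) (c : ZMod 2) (t : ℕ) (x : ℤ) :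
    evol (fun z => if z = a then c else 0) t x = c * evol single t (x - a) := by
  have h1 : ∀ z : ℤ, (if z = a then c else 0) = c * single (z - a) := by
    intro z; simp [single, sub_eq_zero]
  calc evol (fun z => if z = a then c else 0) t x
      = evol (fun z => c * single (z - a)) t x := by
        exact evol_congr t x (fun y _ _ => h1 y)
    _ = c * evol (fun z => single (z - a)) t x := evol_smul _ _ _ _
    _ = c * evol single t (x - a) := by rw [evol_shift]

lemma evol_sum {ι : Type*} (A : Finset ι) (f : ι → Config) (t : ℕ) (x : ℤ) :
    evol (fun z => ∑ j ∈ A, f j z) t x = ∑ j ∈ A, evol (f j) t x := by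
  classical
  induction A using Finset.induction with
  | empty => simpa using evol_zero t x
  | insert _ _ hj ih =>
      rename_i a s
      rw [Finset.sum_insert hj]
      have : evol (fun z => ∑ j ∈ insert a s, f j z) t x
          = evol (fun z => f a z + ∑ j ∈ s, f j z) t x := by
        apply evol_congr; intro y _ _; rw [Finset.sum_insert hj]
      rw [this, evol_add, ih]

/-- Support of evolved single is in the window. -/
lemma evol_single_eq_zero {t : ℕ} {z : ℤ} (h : z < -(t:ℤ) ∨ (t:ℤ) < z) :
    evol single t z = 0 := by
  have : evol single t z = evol (fun _ => (0:ZMod 2)) t z := by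
    apply evol_congr; intro y h1 h2
    simp only [single, ite_eq_right_iff]
    intro hy; omega
  rw [this, evol_zero]

/-- Representation: evolution at a point as finite sum over the window. -/
lemma evol_repr (f : Config) (t : ℕ) (x : ℤ) :
    evol f t x = ∑ y ∈ Finset.Icc (x - t) (x + t), evol single t (x - y) * f y := by
  have h1 : evol f t x
      = evol (fun z => ∑ y ∈ Finset.Icc (x - (t:ℤ)) (x + t), if z = y then f y else 0) t x := by
    apply evol_congr; intro y h1 h2
    rw [Finset.sum_ite_eq (Finset.Icc (x - (t:ℤ)) (x + t)) y f]
    simp [Finset.mem_Icc.mpr ⟨h1, h2⟩]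
  rw [h1, evol_sum]
  apply Finset.sum_congr rfl
  intro y _
  rw [evol_point, mul_comm]

lemma fiber_count {A B : Type*} [AddCommGroup A] [AddCommGroup B] [Fintype A] [Fintype B]
    [DecidableEq B] (L : A → B) (hadd : ∀ a b, L (a + b) = L a + L b)
    (hsurj : Function.Surjective L) (c u : B) :
    (Finset.univ.filter (fun a => L a + c = u)).card * Fintype.card B = Fintype.card A := by
  have hfib : ∀ u1 u2 : B,
      (Finset.univ.filter (fun a => L a + c = u1)).card
        = (Finset.univ.filter (fun a => L a + c = u2)).card := by
    intro u1 u2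
    obtain ⟨d, hd⟩ := hsurj (u2 - u1)
    apply Finset.card_bij' (fun a _ => a + d) (fun a _ => a - d)
    · intro a ha
      simp only [Finset.mem_filter, Finset.mem_univ, true_and] at ha ⊢
      rw [hadd, hd, show L a + (u2 - u1) + c = (L a + c) + (u2 - u1) by abel, ha]
      abel
    · intro a ha
      simp only [Finset.mem_filter, Finset.mem_univ, true_and] at ha ⊢
      have h2 : L (a - d) = L a - L d := by
        have := hadd (a - d) d
        rw [sub_add_cancel] at this
        rw [this]; abel
      rw [h2, hd, show L a - (u2 - u1) + c = (L a + c) - (u2 - u1) by abel, ha]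
      abel
    · intro a _; abel
    · intro a _; abel
  have htot : Fintype.card A = ∑ u' : B, (Finset.univ.filter (fun a => L a + c = u')).card := by
    rw [← Finset.card_univ]
    exact Finset.card_eq_sum_card_fiberwise (fun a _ => Finset.mem_univ _)
  rw [htot, Finset.sum_congr rfl (fun u' _ => hfib u' u), Finset.sum_const, Finset.card_univ,
    smul_eq_mul, mul_comm]

/-- Extension of a partial assignment on `W` by a background configuration. -/
def extW (W : Finset ℤ) (gc : Config) (w : ↑W → ZMod 2) : Config :=
  fun x => if hx : x ∈ W then w ⟨x, hx⟩ else gc x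

/-- Extension of a partial assignment on `W` by zero. -/
def lextW (W : Finset ℤ) (w : ↑W → ZMod 2) : Config :=
  fun x => if hx : x ∈ W then w ⟨x, hx⟩ else 0

lemma extW_decomp (W : Finset ℤ) (gc : Config) (w : ↑W → ZMod 2) (x : ℤ) :
    extW W gc w x = lextW W w x + extW W gc 0 x := by
  simp only [extW, lextW]; split <;> simp

lemma lextW_add (W : Finset ℤ) (w w' : ↑W → ZMod 2) (x : ℤ) :
    lextW W (w + w') x = lextW W w x + lextW W w' x := by
  simp only [lextW]; split <;> simp

theorem randomness_via_dual_assignment {Ω : Type*} [MeasurableSpace Ω]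
    (μ : Measure Ω) [IsProbabilityMeasure μ] (K : Set ℤ) (init : Ω → Config)
    (hrand : IIDFairOn μ init K)
    (hdet : ∀ x ∉ K, ∃ c : ZMod 2, ∀ ω, init ω x = c)
    (n : ℕ) (xs : Fin n → ℤ) (ts : Fin n → ℕ) (F : Fin n → ℤ)
    (hFK : ∀ i, F i ∈ K)
    (hdiag : ∀ i, evol single (ts i) (xs i - F i) = 1)
    (hlow : ∀ i j : Fin n, j < i → evol single (ts j) (xs j - F i) = 0) :
    ∀ (S : Finset (Fin n)) (v : Fin n → ZMod 2),
      μ {ω | ∀ i ∈ S, evol (init ω) (ts i) (xs i) = v i} = (2 : ENNReal)⁻¹ ^ S.card := by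
  classical
  intro S v
  -- background deterministic configuration
  set gc : Config := fun x => if hx : x ∈ K then 0 else (hdet x hx).choose with hgc
  have hgc' : ∀ x ∉ K, ∀ ω, init ω x = gc x := by
    intro x hx ω
    rw [hgc]; simp only [dif_neg hx]
    exact (hdet x hx).choose_spec ω
  -- the window
  set W : Finset ℤ :=
    (S.biUnion (fun i => Finset.Icc (xs i - ts i) (xs i + ts i))).filter (· ∈ K) with hW
  have hWK : ↑W ⊆ K := by
    intro x hx
    exact (Finset.mem_filter.mp hx).2
  have hWmem : ∀ {y : ℤ}, ∀ i ∈ S, xs i - ts i ≤ y → y ≤ xs i + ts i → y ∈ K → y ∈ W := by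
    intro y i hi h1 h2 hy
    rw [hW]
    exact Finset.mem_filter.mpr
      ⟨Finset.mem_biUnion.mpr ⟨i, hi, Finset.mem_Icc.mpr ⟨h1, h2⟩⟩, hy⟩
  -- F maps S into W
  have hFW : ∀ i ∈ S, F i ∈ W := by
    intro i hi
    have hwin : xs i - ts i ≤ F i ∧ F i ≤ xs i + ts i := by
      by_contra hcon
      have : evol single (ts i) (xs i - F i) = 0 :=
        evol_single_eq_zero (by omega)
      rw [hdiag i] at this
      exact one_ne_zero this
    exact hWmem i hi hwin.1 hwin.2 (hFK i)
  -- cylinders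
  set C : (↑W → ZMod 2) → Set Ω := fun w => {ω | ∀ x ∈ W, init ω x = extW W gc w x} with hCdef
  have hCmeas : ∀ w, μ (C w) = (2 : ENNReal)⁻¹ ^ W.card := fun w => hrand W hWK (extW W gc w)
  -- each ω belongs to its own cylinder
  have hself : ∀ ω : Ω, ω ∈ C (fun y : ↑W => init ω ↑y) := by
    intro ω x hx
    simp [extW, hx]
  -- locality: on a cylinder the observables are computed from the extension
  have hloc : ∀ (w : ↑W → ZMod 2) (ω : Ω), ω ∈ C w → ∀ i ∈ S,
      evol (init ω) (ts i) (xs i) = evol (extW W gc w) (ts i) (xs i) := by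
    intro w ω hω i hi
    apply evol_congr
    intro y h1 h2
    by_cases hyK : y ∈ K
    · exact hω y (hWmem i hi h1 h2 hyK)
    · rw [hgc' y hyK ω]
      have hyW : y ∉ W := fun hyW => hyK (hWK hyW)
      simp [extW, hyW]
  -- the affine structure
  set L : (↑W → ZMod 2) → (↑S → ZMod 2) :=
    fun w j => evol (lextW W w) (ts ↑j) (xs ↑j) with hLdef
  set c0 : ↑S → ZMod 2 := fun j => evol (extW W gc 0) (ts ↑j) (xs ↑j) with hc0
  have hdecomp : ∀ (w : ↑W → ZMod 2) (i : Fin n),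
      evol (extW W gc w) (ts i) (xs i)
        = evol (lextW W w) (ts i) (xs i) + evol (extW W gc 0) (ts i) (xs i) := by
    intro w i
    rw [show extW W gc w = fun z => lextW W w z + extW W gc 0 z from funext (extW_decomp W gc w),
      evol_add]
  have hLadd : ∀ w w', L (w + w') = L w + L w' := by
    intro w w'
    funext j
    show evol (lextW W (w + w')) (ts ↑j) (xs ↑j) = _
    rw [show lextW W (w + w') = fun z => lextW W w z + lextW W w' z from
      funext (lextW_add W w w'), evol_add]
    rfl
  -- the triangular matrix entries
  set cM : ↑S → ↑S → ZMod 2 := fun j i => evol single (ts ↑j) (xs ↑j - F ↑i) with hcM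
  -- the section candidate
  set wa : (↑S → ZMod 2) → (↑W → ZMod 2) :=
    fun a y => ∑ j : ↑S, if F ↑j = ↑y then a j else 0 with hwa
  have hLwa : ∀ (a : ↑S → ZMod 2) (j : ↑S), L (wa a) j = ∑ i : ↑S, a i * cM j i := by
    intro a j
    have h1 : lextW W (wa a) = fun z => ∑ i : ↑S, (fun z => if z = F ↑i then a i else 0) z := by
      funext z
      by_cases hz : z ∈ W
      · simp only [lextW, dif_pos hz, hwa]
        exact Finset.sum_congr rfl (fun i _ => if_congr eq_comm rfl rfl)
      · simp only [lextW, dif_neg hz]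
        symm
        apply Finset.sum_eq_zero
        intro i _
        have : z ≠ F ↑i := fun h => hz (h ▸ hFW ↑i i.2)
        simp [this]
    rw [hLdef]
    show evol (lextW W (wa a)) (ts ↑j) (xs ↑j) = _
    rw [h1, evol_sum]
    exact Finset.sum_congr rfl (fun i _ => evol_point _ _ _ _)
  -- kernel triviality
  have hker : ∀ a : ↑S → ZMod 2, (∀ j : ↑S, (∑ i : ↑S, a i * cM j i) = 0) → a = 0 := by
    intro a ha
    by_contra hne
    obtain ⟨j1, hj1⟩ := Function.ne_iff.mp hne
    obtain ⟨j0, hj0mem, hmin⟩ := Finset.exists_min_image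
      (Finset.univ.filter (fun i : ↑S => a i ≠ 0)) (fun i => (↑i : Fin n))
      ⟨j1, Finset.mem_filter.mpr ⟨Finset.mem_univ _, hj1⟩⟩
    have hj0 : a j0 ≠ 0 := (Finset.mem_filter.mp hj0mem).2
    have := ha j0
    rw [Finset.sum_eq_single_of_mem j0 (Finset.mem_univ _)] at this
    · rw [hcM] at this
      simp only at this
      rw [hdiag, mul_one] at this
      exact hj0 this
    · intro i _ hij
      rcases lt_trichotomy (↑i : Fin n) (↑j0 : Fin n) with hlt | heq | hgt
      · have : a i = 0 := by
          by_contra hai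
          have := hmin i (Finset.mem_filter.mpr ⟨Finset.mem_univ _, hai⟩)
          exact absurd this (by exact not_le.mpr hlt)
        rw [this, zero_mul]
      · exact absurd (Subtype.coe_injective heq) hij
      · have : cM j0 i = 0 := by
          rw [hcM]
          exact hlow ↑i ↑j0 hgt
        rw [this, mul_zero]
  -- injectivity hence surjectivity of the composite
  have hMinj : Function.Injective (fun a => L (wa a)) := by
    intro a b hab
    have h0 : ∀ j : ↑S, (∑ i : ↑S, (a - b) i * cM j i) = 0 := by
      intro j
      have h1 : (∑ i : ↑S, (a - b) i * cM j i)
          = (∑ i : ↑S, a i * cM j i) - (∑ i : ↑S, b i * cM j i) := by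
        rw [← Finset.sum_sub_distrib]
        exact Finset.sum_congr rfl (fun i _ => by rw [Pi.sub_apply, sub_mul])
      have hab' : L (wa a) = L (wa b) := hab
      rw [h1, ← hLwa, ← hLwa, hab', sub_self]
    have := hker (a - b) h0
    exact sub_eq_zero.mp this
  have hMsurj : Function.Surjective (fun a => L (wa a)) :=
    Finite.injective_iff_surjective.mp hMinj
  have hLsurj : Function.Surjective L := by
    intro u
    obtain ⟨a, ha⟩ := hMsurj u
    exact ⟨wa a, ha⟩
  -- counting
  set u0 : ↑S → ZMod 2 := fun j => v ↑j with hu0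
  set G : Finset (↑W → ZMod 2) := Finset.univ.filter (fun w => L w + c0 = u0) with hG
  have hcount : G.card * Fintype.card (↑S → ZMod 2) = Fintype.card (↑W → ZMod 2) :=
    fiber_count L hLadd hLsurj c0 u0
  -- condition equivalence
  have hcond : ∀ w : ↑W → ZMod 2,
      (∀ i ∈ S, evol (extW W gc w) (ts i) (xs i) = v i) ↔ L w + c0 = u0 := by
    intro w
    constructor
    · intro h
      funext j
      rw [Pi.add_apply, hLdef, hc0, hu0]
      show evol (lextW W w) (ts ↑j) (xs ↑j) + evol (extW W gc 0) (ts ↑j) (xs ↑j) = v ↑j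
      rw [← hdecomp]
      exact h ↑j j.2
    · intro h i hi
      have := congrFun h ⟨i, hi⟩
      rw [Pi.add_apply] at this
      rw [hdecomp]
      exact this
  -- the event
  set E : Set Ω := {ω | ∀ i ∈ S, evol (init ω) (ts i) (xs i) = v i} with hE
  have hE1 : E ⊆ ⋃ w ∈ G, C w := by
    intro ω hω
    have hmemG : (fun y : ↑W => init ω ↑y) ∈ G := by
      refine Finset.mem_filter.mpr ⟨Finset.mem_univ _, (hcond _).mp ?_⟩
      intro i hi
      rw [← hloc _ ω (hself ω) i hi]
      exact hω i hi
    exact Set.mem_biUnion hmemG (hself ω)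
  set Gc : Finset (↑W → ZMod 2) := Finset.univ.filter (fun w => ¬ (L w + c0 = u0)) with hGc
  have hE2 : Eᶜ ⊆ ⋃ w ∈ Gc, C w := by
    intro ω hω
    have hmemG : (fun y : ↑W => init ω ↑y) ∈ Gc := by
      refine Finset.mem_filter.mpr ⟨Finset.mem_univ _, fun hcon => hω ?_⟩
      intro i hi
      rw [hloc _ ω (hself ω) i hi]
      exact (hcond _).mpr hcon i hi
    exact Set.mem_biUnion hmemG (hself ω)
  -- measure bounds
  set q : ENNReal := (2 : ENNReal)⁻¹ ^ W.card with hq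
  have hμ1 : μ E ≤ G.card * q := by
    calc μ E ≤ μ (⋃ w ∈ G, C w) := measure_mono hE1
      _ ≤ ∑ w ∈ G, μ (C w) := measure_biUnion_finset_le G C
      _ = G.card * q := by
          rw [Finset.sum_congr rfl (fun w _ => hCmeas w), Finset.sum_const, nsmul_eq_mul]
  have hμ2 : μ Eᶜ ≤ Gc.card * q := by
    calc μ Eᶜ ≤ μ (⋃ w ∈ Gc, C w) := measure_mono hE2
      _ ≤ ∑ w ∈ Gc, μ (C w) := measure_biUnion_finset_le Gc C
      _ = Gc.card * q := by
          rw [Finset.sum_congr rfl (fun w _ => hCmeas w), Finset.sum_const, nsmul_eq_mul]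
  have hcards : G.card + Gc.card = 2 ^ W.card := by
    rw [hG, hGc, Finset.card_filter_add_card_filter_not, Finset.card_univ,
      Fintype.card_fun, Fintype.card_coe, ZMod.card]
  have hqtop : q ≠ ⊤ := by
    rw [hq]
    exact ENNReal.pow_ne_top (by simp)
  have hGcfin : (Gc.card : ENNReal) * q ≠ ⊤ :=
    ENNReal.mul_ne_top (by simp) hqtop
  have htotal : (G.card : ENNReal) * q + Gc.card * q = 1 := by
    rw [← add_mul, ← Nat.cast_add, hcards, hq, ← ENNReal.inv_pow]
    push_cast
    exact ENNReal.mul_inv_cancel (pow_ne_zero _ two_ne_zero) (ENNReal.pow_ne_top (by simp))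
  have hge : (G.card : ENNReal) * q ≤ μ E := by
    have h1 : (1 : ENNReal) ≤ μ E + Gc.card * q := by
      calc (1 : ENNReal) = μ Set.univ := (measure_univ).symm
        _ = μ (E ∪ Eᶜ) := by rw [Set.union_compl_self]
        _ ≤ μ E + μ Eᶜ := measure_union_le E Eᶜ
        _ ≤ μ E + Gc.card * q := by gcongr
    rw [← htotal] at h1
    exact ENNReal.le_of_add_le_add_right hGcfin h1
  have hμE : μ E = G.card * q := le_antisymm hμ1 hge
  -- final arithmetic
  have hcardS : Fintype.card (↑S → ZMod 2) = 2 ^ S.card := by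
    rw [Fintype.card_fun, Fintype.card_coe, ZMod.card]
  have hcardW : Fintype.card (↑W → ZMod 2) = 2 ^ W.card := by
    rw [Fintype.card_fun, Fintype.card_coe, ZMod.card]
  rw [hcardS, hcardW] at hcount
  have hGne : G.card ≠ 0 := by
    intro h
    rw [h, zero_mul] at hcount
    have h2 : 0 < 2 ^ W.card := by positivity
    omega
  have hcast : (G.card : ENNReal) * 2 ^ S.card = 2 ^ W.card := by
    exact_mod_cast congrArg (Nat.cast : ℕ → ENNReal) hcount
  rw [hμE, hq, ← ENNReal.inv_pow, ← hcast,
    ENNReal.mul_inv (Or.inl (by exact_mod_cast hGne)) (Or.inl (by simp)),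
    ← mul_assoc, ENNReal.mul_inv_cancel (by exact_mod_cast hGne) (by simp),
    one_mul, ENNReal.inv_pow]
end

section
/- Edge-periodicity: let λ_0 be any configuration of the '1 Or 3' cellular automaton that is 0 on [L+1, ∞). Then for every k ≥ 1, the sequence of edge configurations t ↦ (λ_t(t+L−k+1), λ_t(t+L−k+2), …, λ_t(t+L)) is periodic in t with period at most 2k. -/
open MeasureTheory

lemma step_pow (m : ℕ) (f : Config) (x : ℤ) :
    step^[2 ^ m] f x = f (x - 2 ^ m) + f x + f (x + 2 ^ m) := by
  induction m generalizing f x with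
  | zero => simp [step]
  | succ m ih =>
      have h2 : (2 : ℕ) ^ (m + 1) = 2 ^ m + 2 ^ m := by ring
      rw [h2, Function.iterate_add_apply, ih, ih, ih, ih]
      push_cast
      have hchar : ∀ a : ZMod 2, a + a = 0 := by decide
      ring_nf
      simp [show ∀ a : ZMod 2, a * 2 = 0 from by decide,
            show ∀ a : ZMod 2, a * 3 = a from by decide]

lemma evol_supp (lam0 : Config) (L : ℤ) (hsupp : ∀ x : ℤ, L < x → lam0 x = 0)
    (t : ℕ) : ∀ x : ℤ, (t : ℤ) + L < x → evol lam0 t x = 0 := by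
  induction t with
  | zero => simpa [evol] using hsupp
  | succ t ih =>
      intro x hx
      have h1 : (t : ℤ) + L < x - 1 := by push_cast at hx ⊢; omega
      have h2 : (t : ℤ) + L < x := by push_cast at hx ⊢; omega
      have h3 : (t : ℤ) + L < x + 1 := by push_cast at hx ⊢; omega
      have : evol lam0 (t + 1) = step (evol lam0 t) := by
        simp [evol, Function.iterate_succ_apply']
      rw [this]
      simp [step, ih _ h1, ih _ h2, ih _ h3]

theorem edge_periodicity (lam0 : Config) (L : ℤ)
    (hsupp : ∀ x : ℤ, L < x → lam0 x = 0) (k : ℕ) (hk : 1 ≤ k) :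
    ∃ P : ℕ, 0 < P ∧ P ≤ 2 * k ∧ ∀ (t j : ℕ), j < k →
      evol lam0 (t + P) ((t : ℤ) + P + L - j) = evol lam0 t ((t : ℤ) + L - j) := by
  set m := Nat.clog 2 k with hm
  refine ⟨2 ^ m, Nat.pow_pos (by norm_num), ?_, ?_⟩
  · rcases eq_or_lt_of_le hk with h | h
    · simp [hm, ← h, Nat.clog]
    · have h1 : 2 ^ (m - 1) < k := Nat.pow_pred_clog_lt_self (by norm_num) h
      have hm1 : 1 ≤ m := Nat.clog_pos one_lt_two h
      calc 2 ^ m = 2 * 2 ^ (m - 1) := by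
            rw [← pow_succ']; congr 1; omega
        _ ≤ 2 * k := by omega
  · intro t j hj
    have hkP : k ≤ 2 ^ m := Nat.le_pow_clog (by norm_num) k
    have hiter : evol lam0 (t + 2 ^ m) = step^[2 ^ m] (evol lam0 t) := by
      simp [evol, add_comm t, Function.iterate_add_apply]
    rw [hiter, step_pow]
    have hx0 : evol lam0 t ((t : ℤ) + 2 ^ m + L - j) = 0 := by
      apply evol_supp lam0 L hsupp
      have : (j : ℤ) < 2 ^ m := by exact_mod_cast lt_of_lt_of_le hj hkP
      push_cast; omega
    have hx1 : evol lam0 t ((t : ℤ) + 2 ^ m + L - j + 2 ^ m) = 0 := by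
      apply evol_supp lam0 L hsupp
      have : (j : ℤ) < 2 ^ m := by exact_mod_cast lt_of_lt_of_le hj hkP
      push_cast; omega
    push_cast at hx0 hx1 ⊢
    rw [hx0, hx1, show (t:ℤ) + 2^m + L - j - 2^m = (t:ℤ) + L - j by ring]
    ring
end
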